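/- arXiv:2110.06485 — 5 statements merged into one kernel-verified Lean document; each statement's English description precedes it below -/
import Mathlib

section
/- Let c_{ij} = Σ_{l : i < l ≤ n} a_{l,i}·a_{l,j} where A = (a_{i,j}) ∈ {0,1}^{n×n} is a symmetric adjacency matrix of a graph G with no self-loops. Then Σ_{1 ≤ i < j ≤ n} c_{ij}² ≤ 2·C₄(G) + S₂(G), where C₄(G) is the number of 4-cycles in G and S₂(G) is the number of 2-stars (paths of length 2) in G. -/
open Finset

lemma sq_eq_choose (c : ℕ) : c ^ 2 = 2 * c.choose 2 + c := by
  induction c with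
  | zero => rfl
  | succ m ih =>
    rw [Nat.choose_succ_succ, Nat.choose_one_right]
    show (m+1)^2 = 2*(m + m.choose 2) + (m+1)
    have h : (m+1)^2 = m^2 + 2*m + 1 := by ring
    rw [h, ih]; ring

lemma key {n : ℕ} (b : Fin n → ℕ) (hb : ∀ x, b x * b x = b x) :
    (∑ x : Fin n, b x) ^ 2
      = 2 * (∑ x : Fin n, ∑ y : Fin n, if x < y then b x * b y else 0) + ∑ x : Fin n, b x := by
  rw [sq, Finset.sum_mul_sum]
  have split : ∀ x y : Fin n, b x * b y =
      (if x < y then b x * b y else 0) +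
      ((if y < x then b x * b y else 0) + (if x = y then b x else 0)) := by
    intro x y
    rcases lt_trichotomy x y with h|h|h
    · simp [h, lt_asymm h, h.ne]
    · subst h; simp [hb, lt_irrefl]
    · simp [h, lt_asymm h, h.ne']
  rw [show (∑ x : Fin n, ∑ y : Fin n, b x * b y)
      = ∑ x : Fin n, ∑ y : Fin n, ((if x < y then b x * b y else 0) +
        ((if y < x then b x * b y else 0) + (if x = y then b x else 0))) from
    Finset.sum_congr rfl fun x _ => Finset.sum_congr rfl fun y _ => split x y]
  simp only [Finset.sum_add_distrib]
  have hB : (∑ x : Fin n, ∑ y : Fin n, if y < x then b x * b y else 0)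
      = ∑ x : Fin n, ∑ y : Fin n, if x < y then b x * b y else 0 := by
    rw [Finset.sum_comm]
    refine Finset.sum_congr rfl fun x _ => Finset.sum_congr rfl fun y _ => ?_
    split <;> ring
  have hC : (∑ x : Fin n, ∑ y : Fin n, if x = y then b x else 0) = ∑ x : Fin n, b x := by
    refine Finset.sum_congr rfl fun x _ => ?_
    simp
  rw [hB, hC]
  ring

lemma choose_eq {n : ℕ} (b : Fin n → ℕ) (hb : ∀ x, b x * b x = b x) :
    (∑ x : Fin n, b x).choose 2
      = ∑ x : Fin n, ∑ y : Fin n, if x < y then b x * b y else 0 := by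
  have h1 := key b hb
  have h2 := sq_eq_choose (∑ x : Fin n, b x)
  omega

/-- `c i j = Σ_{l > i} a l i * a l j`: common neighbors of `i`,`j` with index above `i`. -/
def cCount (n : ℕ) (a : Fin n → Fin n → ℕ) (i j : Fin n) : ℕ :=
  ∑ l : Fin n, if i < l then a l i * a l j else 0

/-- Number of 2-stars: `Σ_v C(deg v, 2)`. -/
def twoStars (n : ℕ) (a : Fin n → Fin n → ℕ) : ℕ :=
  ∑ v : Fin n, Nat.choose (∑ u : Fin n, a v u) 2

/-- Number of 4-cycles, counted via a canonical representative tuple: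
`p` is the minimal vertex, its two cycle-neighbors are `q < s`, and `r` is opposite. -/
def fourCycles (n : ℕ) (a : Fin n → Fin n → ℕ) : ℕ :=
  (Finset.univ.filter (fun t : Fin n × Fin n × Fin n × Fin n =>
    t.1 < t.2.1 ∧ t.2.1 < t.2.2.2 ∧ t.1 < t.2.2.1 ∧
    t.2.1 ≠ t.2.2.1 ∧ t.2.2.2 ≠ t.2.2.1 ∧
    a t.1 t.2.1 = 1 ∧ a t.2.1 t.2.2.1 = 1 ∧ a t.2.2.1 t.2.2.2 = 1 ∧
    a t.2.2.2 t.1 = 1)).card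

theorem sum_c_sq_le_two_fourCycles_add_twoStars
    (n : ℕ) (a : Fin n → Fin n → ℕ)
    (hbin : ∀ i j, a i j = 0 ∨ a i j = 1)
    (hsymm : ∀ i j, a i j = a j i)
    (hdiag : ∀ i, a i i = 0) :
    (∑ i : Fin n, ∑ j : Fin n, if i < j then (cCount n a i j) ^ 2 else 0)
      ≤ 2 * fourCycles n a + twoStars n a := by
  -- the indicator is idempotent
  have hc01 : ∀ i j l : Fin n,
      (if i < l then a l i * a l j else 0) * (if i < l then a l i * a l j else 0)
        = (if i < l then a l i * a l j else 0) := by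
    intro i j l
    split
    · rcases hbin l i with h|h <;> rcases hbin l j with h'|h' <;> simp [h, h']
    · rfl
  -- the pairwise-product inner sum
  set T : Fin n → Fin n → ℕ := fun i j =>
    ∑ l : Fin n, ∑ m : Fin n, if l < m then
      (if i < l then a l i * a l j else 0) * (if i < m then a m i * a m j else 0) else 0
    with hT
  have expand : ∀ i j : Fin n, (cCount n a i j) ^ 2 = 2 * T i j + cCount n a i j := by
    intro i j
    have := key (fun l => if i < l then a l i * a l j else 0) (fun l => hc01 i j l)
    simpa [cCount, hT] using this
  -- split the LHS
  have hLHS : (∑ i : Fin n, ∑ j : Fin n, if i < j then (cCount n a i j) ^ 2 else 0)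
      = 2 * (∑ i : Fin n, ∑ j : Fin n, if i < j then T i j else 0)
        + (∑ i : Fin n, ∑ j : Fin n, if i < j then cCount n a i j else 0) := by
    rw [Finset.mul_sum, ← Finset.sum_add_distrib]
    refine Finset.sum_congr rfl fun i _ => ?_
    rw [Finset.mul_sum, ← Finset.sum_add_distrib]
    refine Finset.sum_congr rfl fun j _ => ?_
    split
    · rw [expand i j]
    · simp
  rw [hLHS]
  -- Part B : the pair sum equals fourCycles
  have h4 : (∑ i : Fin n, ∑ j : Fin n, if i < j then T i j else 0) = fourCycles n a := by
    have step1 : (∑ i : Fin n, ∑ j : Fin n, if i < j then T i j else 0)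
        = ∑ i : Fin n, ∑ j : Fin n, ∑ l : Fin n, ∑ m : Fin n,
            (if i < j then if l < m then
              (if i < l then a l i * a l j else 0) * (if i < m then a m i * a m j else 0)
              else 0 else 0) := by
      refine Finset.sum_congr rfl fun i _ => Finset.sum_congr rfl fun j _ => ?_
      split
      · rfl
      · simp
    rw [step1]
    have step2 : (∑ i : Fin n, ∑ j : Fin n, ∑ l : Fin n, ∑ m : Fin n,
            (if i < j then if l < m then
              (if i < l then a l i * a l j else 0) * (if i < m then a m i * a m j else 0)
              else 0 else 0))
        = ∑ i : Fin n, ∑ l : Fin n, ∑ j : Fin n, ∑ m : Fin n,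
            (if i < j then if l < m then
              (if i < l then a l i * a l j else 0) * (if i < m then a m i * a m j else 0)
              else 0 else 0) :=
      Finset.sum_congr rfl fun i _ => Finset.sum_comm
    rw [step2]
    unfold fourCycles
    rw [Finset.card_filter]
    simp only [Fintype.sum_prod_type]
    refine Finset.sum_congr rfl fun p _ => Finset.sum_congr rfl fun q _ =>
      Finset.sum_congr rfl fun r _ => Finset.sum_congr rfl fun s _ => ?_
    by_cases hpr : p < r
    · by_cases hqs : q < s
      · by_cases hpq : p < q
        · by_cases hqr : q = r
          · subst hqr
            simp [hdiag, hpr, hqs, hpq]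
          · by_cases hsr : s = r
            · subst hsr
              simp [hdiag, hpr, hqs, hpq]
            · have hps : p < s := hpq.trans hqs
              rcases hbin q p with h1|h1 <;> rcases hbin q r with h2|h2 <;>
                rcases hbin s p with h3|h3 <;> rcases hbin s r with h4|h4 <;>
                simp [h1, h2, h3, h4, hsymm p q, hsymm r s, hpq, hqs, hpr, hps, hqr, hsr]
        · simp [hpq]
      · simp [hqs]
    · simp [hpr]
  rw [h4]
  -- Part A : the linear sum is at most twoStars
  have hS : (∑ i : Fin n, ∑ j : Fin n, if i < j then cCount n a i j else 0) ≤ twoStars n a := by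
    have hdeg : ∀ v : Fin n, (∑ u : Fin n, a v u).choose 2
        = ∑ x : Fin n, ∑ y : Fin n, if x < y then a v x * a v y else 0 := fun v =>
      choose_eq (fun u => a v u) (fun u => by rcases hbin v u with h|h <;> simp [h])
    calc (∑ i : Fin n, ∑ j : Fin n, if i < j then cCount n a i j else 0)
        ≤ ∑ i : Fin n, ∑ j : Fin n, if i < j then (∑ l : Fin n, a l i * a l j) else 0 := by
          refine Finset.sum_le_sum fun i _ => Finset.sum_le_sum fun j _ => ?_
          split
          · refine Finset.sum_le_sum fun l _ => ?_
            split
            · exact le_refl _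
            · exact Nat.zero_le _
          · exact le_refl _
      _ = ∑ i : Fin n, ∑ j : Fin n, ∑ l : Fin n, if i < j then a l i * a l j else 0 := by
          refine Finset.sum_congr rfl fun i _ => Finset.sum_congr rfl fun j _ => ?_
          split
          · rfl
          · simp
      _ = ∑ i : Fin n, ∑ l : Fin n, ∑ j : Fin n, if i < j then a l i * a l j else 0 :=
          Finset.sum_congr rfl fun i _ => Finset.sum_comm
      _ = ∑ l : Fin n, ∑ i : Fin n, ∑ j : Fin n, if i < j then a l i * a l j else 0 :=
          Finset.sum_comm
      _ = ∑ l : Fin n, (∑ u : Fin n, a l u).choose 2 :=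
          Finset.sum_congr rfl fun l _ => (hdeg l).symm
      _ = twoStars n a := rfl
  omega
end

section
/- If each of n local randomizers R₁, …, Rₙ (where Rᵢ acts on the i-th row aᵢ of a symmetric adjacency matrix A ∈ {0,1}^{n×n}) satisfies ε-edge LDP, and each Rᵢ depends only on the entries a_{i,1}, …, a_{i,i−1} (the lower-triangular part of A), then the tuple (R₁, …, Rₙ) satisfies ε-relationship DP: for any two graphs G, G' differing in one edge, and any output tuple (s₁,…,sₙ), Pr[(R₁(a₁),…,Rₙ(aₙ)) = (s₁,…,sₙ)] ≤ e^ε · Pr[(R₁(a'₁),…,Rₙ(a'ₙ)) = (s₁,…,sₙ)], where aᵢ, a'ᵢ are the rows of the adjacency matrices of G, G'. -/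
open Real

/-- Two neighbor lists differ in at most one coordinate. -/
def AdjOne {n : ℕ} (a a' : Fin n → Bool) : Prop :=
  ∃ i, a i ≠ a' i ∧ ∀ j, j ≠ i → a j = a' j

/-- A (discrete) randomizer satisfies `ε`-edge LDP. -/
def EdgeLDP {n : ℕ} {O : Type*} (ε : ℝ) (R : (Fin n → Bool) → O → ℝ) : Prop :=
  ∀ a a' : Fin n → Bool, AdjOne a a' → ∀ s : O, R a s ≤ Real.exp ε * R a' s

/-- Two symmetric adjacency matrices differ in exactly one edge `{i,j}`. -/
def DifferOneEdge {n : ℕ} (A A' : Fin n → Fin n → Bool) : Prop :=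
  ∃ i j : Fin n, i ≠ j ∧ A i j ≠ A' i j ∧
    ∀ p q : Fin n, (p, q) ≠ (i, j) → (p, q) ≠ (j, i) → A p q = A' p q

lemma relationshipDP_aux {n : ℕ} {O : Fin n → Type*} (ε : ℝ)
    (R : ∀ i : Fin n, (Fin n → Bool) → O i → ℝ)
    (hpos : ∀ i a s, 0 ≤ R i a s)
    (hLDP : ∀ i, EdgeLDP ε (R i))
    (hlower : ∀ i : Fin n, ∀ a a' : Fin n → Bool,
      (∀ j : Fin n, j < i → a j = a' j) → ∀ s, R i a s = R i a' s)
    (A A' : Fin n → Fin n → Bool)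
    (hsymm : ∀ p q, A p q = A q p) (hsymm' : ∀ p q, A' p q = A' q p)
    (i j : Fin n) (hij : i < j) (hne : A i j ≠ A' i j)
    (heq : ∀ p q : Fin n, (p, q) ≠ (i, j) → (p, q) ≠ (j, i) → A p q = A' p q)
    (s : ∀ i, O i) :
    (∏ i : Fin n, R i (A i) (s i)) ≤ Real.exp ε * ∏ i : Fin n, R i (A' i) (s i) := by
  have hothers : ∀ k, k ≠ j → R k (A k) (s k) = R k (A' k) (s k) := by
    intro k hk
    apply hlower k
    intro q hq
    apply heq
    · intro h
      obtain ⟨h1, h2⟩ := Prod.mk.injEq _ _ _ _ ▸ h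
      subst h1; subst h2; exact absurd hq (not_lt.2 hij.le)
    · intro h
      obtain ⟨h1, h2⟩ := Prod.mk.injEq _ _ _ _ ▸ h
      exact hk h1
  have hj : R j (A j) (s j) ≤ Real.exp ε * R j (A' j) (s j) := by
    apply hLDP j
    refine ⟨i, ?_, ?_⟩
    · rw [hsymm j i, hsymm' j i]; exact hne
    · intro q hq
      apply heq
      · intro h
        obtain ⟨h1, _⟩ := Prod.mk.injEq _ _ _ _ ▸ h
        exact absurd h1 hij.ne'
      · intro h
        obtain ⟨_, h2⟩ := Prod.mk.injEq _ _ _ _ ▸ h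
        exact hq h2
  have hprodeq : ∏ k ∈ Finset.univ.erase j, R k (A k) (s k)
      = ∏ k ∈ Finset.univ.erase j, R k (A' k) (s k) := by
    apply Finset.prod_congr rfl
    intro k hk
    exact hothers k (Finset.mem_erase.1 hk).1
  calc (∏ i : Fin n, R i (A i) (s i))
      = R j (A j) (s j) * ∏ k ∈ Finset.univ.erase j, R k (A k) (s k) :=
        (Finset.mul_prod_erase Finset.univ _ (Finset.mem_univ j)).symm
    _ ≤ (Real.exp ε * R j (A' j) (s j)) * ∏ k ∈ Finset.univ.erase j, R k (A' k) (s k) := by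
        rw [hprodeq]
        exact mul_le_mul_of_nonneg_right hj (Finset.prod_nonneg fun k _ => hpos _ _ _)
    _ = Real.exp ε * ∏ i : Fin n, R i (A' i) (s i) := by
        rw [mul_assoc, Finset.mul_prod_erase Finset.univ (fun k => R k (A' k) (s k)) (Finset.mem_univ j)]

/-- If each local randomizer `Rᵢ` satisfies `ε`-edge LDP and uses only the
entries `a_{i,1}, …, a_{i,i-1}` (the lower triangular part of `A`), then the
independent tuple `(R₁, …, Rₙ)` satisfies `ε`-relationship DP. -/
theorem relationshipDP_of_lower_triangular {n : ℕ} {O : Fin n → Type*} (ε : ℝ)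
    (R : ∀ i : Fin n, (Fin n → Bool) → O i → ℝ)
    (hpos : ∀ i a s, 0 ≤ R i a s)
    (hLDP : ∀ i, EdgeLDP ε (R i))
    (hlower : ∀ i : Fin n, ∀ a a' : Fin n → Bool,
      (∀ j : Fin n, j < i → a j = a' j) → ∀ s, R i a s = R i a' s)
    (A A' : Fin n → Fin n → Bool)
    (hsymm : ∀ p q, A p q = A q p) (hsymm' : ∀ p q, A' p q = A' q p)
    (hdiff : DifferOneEdge A A') (s : ∀ i, O i) :
    (∏ i : Fin n, R i (A i) (s i)) ≤ Real.exp ε * ∏ i : Fin n, R i (A' i) (s i) := by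
  obtain ⟨i, j, hij, hne, heq⟩ := hdiff
  rcases lt_or_gt_of_ne hij with h | h
  · exact relationshipDP_aux ε R hpos hLDP hlower A A' hsymm hsymm' i j h hne heq s
  · refine relationshipDP_aux ε R hpos hLDP hlower A A' hsymm hsymm' j i h ?_ ?_ s
    · rw [hsymm j i, hsymm' j i]; exact hne
    · intro p q h1 h2; exact heq p q h2 h1
end

section
/- If each of n local randomizers R₁, …, Rₙ satisfies ε-edge LDP and they are run independently on the rows of the adjacency matrix, then the tuple (R₁, …, Rₙ) satisfies 2ε-relationship DP. -/
open Real

/-- If each local randomizer `Rᵢ` satisfies `ε`-edge LDP and the randomizers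
are run independently on the rows of the adjacency matrix, then the tuple
`(R₁, …, Rₙ)` satisfies `2ε`-relationship DP. -/
theorem relationshipDP_of_edgeLDP {n : ℕ} {O : Fin n → Type*} (ε : ℝ)
    (R : ∀ i : Fin n, (Fin n → Bool) → O i → ℝ)
    (hpos : ∀ i a s, 0 ≤ R i a s)
    (hLDP : ∀ i, EdgeLDP ε (R i))
    (A A' : Fin n → Fin n → Bool)
    (hsymm : ∀ p q, A p q = A q p) (hsymm' : ∀ p q, A' p q = A' q p)
    (hdiff : DifferOneEdge A A') (s : ∀ i, O i) :
    (∏ i : Fin n, R i (A i) (s i))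
      ≤ Real.exp (2 * ε) * ∏ i : Fin n, R i (A' i) (s i) := by
  obtain ⟨i, j, hij, hchg, hsame⟩ := hdiff
  set c : Fin n → ℝ := fun k => if k ∈ ({i, j} : Finset (Fin n)) then Real.exp ε else 1 with hc
  have key : ∀ k, R k (A k) (s k) ≤ c k * R k (A' k) (s k) := by
    intro k
    by_cases hk : k ∈ ({i, j} : Finset (Fin n))
    · have hadj : AdjOne (A k) (A' k) := by
        rcases Finset.mem_insert.1 hk with hki | hkj
        · subst hki
          exact ⟨j, hchg, fun q hq => hsame k q (by simp [hq]) (by simp [hij])⟩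
        · have hkj : k = j := by simpa using hkj
          subst hkj
          refine ⟨i, ?_, fun q hq => hsame k q (by simp [Ne.symm hij]) (by simp [hq])⟩
          rw [hsymm k i, hsymm' k i]; exact hchg
      simp only [c, if_pos hk]
      exact hLDP k _ _ hadj (s k)
    · have heq : A k = A' k := by
        funext q
        have hki : k ≠ i := by intro h; exact hk (by simp [h])
        have hkj : k ≠ j := by intro h; exact hk (by simp [h])
        exact hsame k q (by simp [hki]) (by simp [hkj])
      simp only [c, if_neg hk, one_mul, heq, le_refl]
  calc (∏ k : Fin n, R k (A k) (s k))
      ≤ ∏ k : Fin n, c k * R k (A' k) (s k) :=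
        Finset.prod_le_prod (fun k _ => hpos k _ _) (fun k _ => key k)
    _ = (∏ k : Fin n, c k) * ∏ k : Fin n, R k (A' k) (s k) := Finset.prod_mul_distrib
    _ = Real.exp (2 * ε) * ∏ k : Fin n, R k (A' k) (s k) := by
        congr 1
        rw [hc, Finset.prod_ite_mem, Finset.univ_inter, Finset.prod_pair hij,
          ← Real.exp_add, two_mul]
end

section
/- In the ARRFull triangle-counting estimator, the estimate f̂(G) = (1/(μ(1−ρ))) · Σᵢ wᵢ with wᵢ = tᵢ − μρ·sᵢ is unbiased: E[f̂(G)] = f_△(G), the number of triangles in G. Here tᵢ = |{(j,k) : j<k<i, a_{i,j}=a_{i,k}=1, (v_j,v_k) ∈ E'}|, sᵢ = |{(j,k) : j<k<i, a_{i,j}=a_{i,k}=1}|, and E' is obtained by including each pair (v_j,v_k) with j<k independently, with probability μ if a_{j,k}=1 and probability μρ if a_{j,k}=0, where ρ = e^{−ε₁} and 0 < μ ≤ e^{ε₁}/(e^{ε₁}+1). -/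
open Real Finset

/-- Ordered pairs `(j,k)` of vertices with `j < k`. -/
abbrev OPair (n : ℕ) := {p : Fin n × Fin n // p.1 < p.2}

/-- Probability that the pair `p` is included in the noisy edge set `E'`:
`μ` if it is an edge of `G` and `μρ` otherwise. -/
noncomputable def incProb (n : ℕ) (a : Fin n → Fin n → Bool) (μ ρ : ℝ)
    (p : OPair n) : ℝ :=
  if a p.1.1 p.1.2 then μ else μ * ρ

/-- Probability of observing the noisy edge configuration `E'`. -/
noncomputable def confProb (n : ℕ) (a : Fin n → Fin n → Bool) (μ ρ : ℝ)
    (E' : OPair n → Bool) : ℝ :=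
  ∏ p : OPair n, if E' p then incProb n a μ ρ p else 1 - incProb n a μ ρ p

/-- `tᵢ`: number of noisy triangles `(vᵢ,vⱼ,vₖ)`, `j<k<i`, with `(vⱼ,vₖ) ∈ E'`. -/
def tCount (n : ℕ) (a : Fin n → Fin n → Bool) (E' : OPair n → Bool)
    (i : Fin n) : ℝ :=
  ∑ p : OPair n,
    if p.1.2 < i ∧ a i p.1.1 = true ∧ a i p.1.2 = true ∧ E' p = true then 1 else 0

/-- `sᵢ`: number of pairs `j<k<i` of neighbors of `vᵢ`. -/
def sCount (n : ℕ) (a : Fin n → Fin n → Bool) (i : Fin n) : ℝ :=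
  ∑ p : OPair n, if p.1.2 < i ∧ a i p.1.1 = true ∧ a i p.1.2 = true then 1 else 0

/-- The triangle count `f_△(G) = |{(i,j,k) : j<k<i, a_{ij}=a_{ik}=a_{jk}=1}|`. -/
def triCount (n : ℕ) (a : Fin n → Fin n → Bool) : ℝ :=
  ∑ i : Fin n, ∑ p : OPair n,
    if p.1.2 < i ∧ a i p.1.1 = true ∧ a i p.1.2 = true ∧ a p.1.1 p.1.2 = true
    then 1 else 0

lemma sum_prod_bool {ι : Type*} [Fintype ι] [DecidableEq ι] (g : ι → Bool → ℝ) :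
    ∑ E : ι → Bool, ∏ p, g p (E p) = ∏ p, (g p true + g p false) := by
  rw [← Fintype.piFinset_univ, ← Finset.prod_univ_sum]
  simp [add_comm]

lemma sum_confProb (n : ℕ) (a : Fin n → Fin n → Bool) (μ ρ : ℝ) :
    ∑ E' : OPair n → Bool, confProb n a μ ρ E' = 1 := by
  unfold confProb
  rw [sum_prod_bool (fun p b => if b then incProb n a μ ρ p else 1 - incProb n a μ ρ p)]
  simp

lemma exp_ind (n : ℕ) (a : Fin n → Fin n → Bool) (μ ρ : ℝ) (p₀ : OPair n) :
    ∑ E' : OPair n → Bool, confProb n a μ ρ E' * (if E' p₀ then (1:ℝ) else 0)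
      = incProb n a μ ρ p₀ := by
  have h1 : ∀ E' : OPair n → Bool,
      confProb n a μ ρ E' * (if E' p₀ then (1:ℝ) else 0)
      = ∏ p : OPair n, ((if E' p then incProb n a μ ρ p else 1 - incProb n a μ ρ p) *
          (if p = p₀ then (if E' p then (1:ℝ) else 0) else 1)) := by
    intro E'
    rw [Finset.prod_mul_distrib, Finset.prod_ite_eq' Finset.univ p₀
      (fun p => if E' p then (1:ℝ) else 0)]
    simp [confProb]
  simp_rw [h1]
  rw [sum_prod_bool (fun p b => (if b then incProb n a μ ρ p else 1 - incProb n a μ ρ p) *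
      (if p = p₀ then (if b then (1:ℝ) else 0) else 1))]
  rw [Finset.prod_eq_single p₀]
  · simp
  · intro p _ hp; simp [hp]
  · simp

lemma exp_tCount (n : ℕ) (a : Fin n → Fin n → Bool) (μ ρ : ℝ) (i : Fin n) :
    ∑ E' : OPair n → Bool, confProb n a μ ρ E' * tCount n a E' i
      = ∑ p : OPair n, (if p.1.2 < i ∧ a i p.1.1 = true ∧ a i p.1.2 = true
          then incProb n a μ ρ p else 0) := by
  unfold tCount
  have hrw : ∀ (E' : OPair n → Bool) (p : OPair n),
      (if p.1.2 < i ∧ a i p.1.1 = true ∧ a i p.1.2 = true ∧ E' p = true then (1:ℝ) else 0)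
      = (if p.1.2 < i ∧ a i p.1.1 = true ∧ a i p.1.2 = true then (1:ℝ) else 0) *
        (if E' p then (1:ℝ) else 0) := by
    intro E' p; cases hE : E' p <;> simp [hE]
  simp_rw [hrw, Finset.mul_sum]
  rw [Finset.sum_comm]
  refine Finset.sum_congr rfl fun p _ => ?_
  simp_rw [mul_left_comm (confProb n a μ ρ _)]
  rw [← Finset.mul_sum, exp_ind]
  split_ifs <;> simp

/-- Unbiasedness of the `ARRFull` triangle estimator:
`E[(1/(μ(1-ρ))) Σᵢ (tᵢ - μρ sᵢ)] = f_△(G)`. -/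
theorem arrfull_unbiased (n : ℕ) (a : Fin n → Fin n → Bool)
    (hsymm : ∀ i j, a i j = a j i)
    (ε₁ μ ρ : ℝ) (hε₁ : 0 < ε₁) (hρ : ρ = Real.exp (-ε₁))
    (hμ0 : 0 < μ) (hμ : μ ≤ Real.exp ε₁ / (Real.exp ε₁ + 1)) :
    (∑ E' : OPair n → Bool,
        confProb n a μ ρ E' *
          ((1 / (μ * (1 - ρ))) *
            ∑ i : Fin n, (tCount n a E' i - μ * ρ * sCount n a i)))
      = triCount n a := by
  have hρ1 : (0:ℝ) < 1 - ρ := by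
    have h1 : Real.exp (-ε₁) < 1 := by
      have := Real.exp_lt_exp.mpr (show -ε₁ < 0 by linarith)
      simpa using this
    rw [hρ]; linarith
  have hne : μ * (1 - ρ) ≠ 0 := ne_of_gt (mul_pos hμ0 hρ1)
  have step1 : ∀ E' : OPair n → Bool,
      confProb n a μ ρ E' * ((1 / (μ * (1 - ρ))) *
        ∑ i : Fin n, (tCount n a E' i - μ * ρ * sCount n a i))
      = (1 / (μ * (1 - ρ))) * ∑ i : Fin n,
          (confProb n a μ ρ E' * tCount n a E' i -
            confProb n a μ ρ E' * (μ * ρ * sCount n a i)) := by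
    intro E'
    rw [mul_left_comm, Finset.mul_sum]
    congr 1
    exact Finset.sum_congr rfl fun i _ => mul_sub _ _ _
  simp_rw [step1]
  rw [← Finset.mul_sum, Finset.sum_comm]
  have hs : ∀ i : Fin n, ∑ E' : OPair n → Bool,
      confProb n a μ ρ E' * (μ * ρ * sCount n a i) = μ * ρ * sCount n a i := by
    intro i
    rw [← Finset.sum_mul, sum_confProb, one_mul]
  simp_rw [Finset.sum_sub_distrib, hs, exp_tCount]
  unfold sCount triCount
  rw [← Finset.sum_sub_distrib, Finset.mul_sum]
  refine Finset.sum_congr rfl fun i _ => ?_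
  have hmr : μ * ρ * (∑ p : OPair n,
      if p.1.2 < i ∧ a i p.1.1 = true ∧ a i p.1.2 = true then (1:ℝ) else 0)
      = ∑ p : OPair n, μ * ρ *
        (if p.1.2 < i ∧ a i p.1.1 = true ∧ a i p.1.2 = true then (1:ℝ) else 0) := by
    rw [Finset.mul_sum]
  rw [hmr, ← Finset.sum_sub_distrib, Finset.mul_sum]
  refine Finset.sum_congr rfl fun p _ => ?_
  unfold incProb
  by_cases h1 : p.1.2 < i ∧ a i p.1.1 = true ∧ a i p.1.2 = true
  · by_cases h2 : a p.1.1 p.1.2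
    · simp only [h1, h2, if_true, and_true]
      field_simp
    · simp only [h1, h2, if_true, if_false, and_false]
      simp [h2]
  · have h4 : ¬(p.1.2 < i ∧ a i p.1.1 = true ∧ a i p.1.2 = true ∧ a p.1.1 p.1.2 = true) := by
      tauto
    simp [h1, h4]
end

section
/- Combining the unbiasedness and variance bound of the ARRFull estimator with independent Laplace noise: if f̂(G) = (1/(μ(1−ρ)))·Σᵢ(wᵢ + Lᵢ) where Lᵢ are i.i.d. Laplace random variables with scale d_max/ε₂, independent of everything else, then E[(f̂(G) − f_△(G))²] ≤ (2C₄(G) + S₂(G))/(μ(1−ρ)²) + 2n·d_max²/(μ²(1−ρ)²·ε₂²). -/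
/-! Since the rescaled sum is unbiased for `f`, its `l₂` loss is its variance, which the
independence of `W` and the noise splits into the two given variances. -/

open MeasureTheory ProbabilityTheory Real

theorem ProbabilityTheory.integral_sq_sub_eq_variance {Ω : Type*} [MeasurableSpace Ω]
    {μ : Measure Ω} {X : Ω → ℝ} {a : ℝ} (hX : AEMeasurable X μ) (hmean : μ[X] = a) :
    ∫ ω, (X ω - a) ^ 2 ∂μ = Var[X; μ] := by
  rw [variance_eq_integral hX, hmean]

theorem arrfull_l2_loss_le_general
    {Ω : Type*} [MeasurableSpace Ω] (P : Measure Ω) [IsProbabilityMeasure P]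
    (n : ℕ) (W : Ω → ℝ) (L : Fin n → Ω → ℝ)
    (f C4 S2 dmax : ℝ) (μ ρ ε₁ ε₂ : ℝ)
    (hε₁ : 0 < ε₁) (hρ : ρ = Real.exp (-ε₁)) (hμ0 : 0 < μ)
    (hW2 : MemLp W 2 P) (hL2 : MemLp (fun ω => ∑ i : Fin n, L i ω) 2 P)
    (hWmean : ∫ ω, W ω ∂P = μ * (1 - ρ) * f)
    (hWvar : variance W P ≤ μ * (2 * C4 + S2))
    (hLmean : ∫ ω, (∑ i : Fin n, L i ω) ∂P = 0)
    (hLvar : variance (fun ω => ∑ i : Fin n, L i ω) P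
      = 2 * n * (dmax / ε₂) ^ 2)
    (hindep : IndepFun W (fun ω => ∑ i : Fin n, L i ω) P) :
    (∫ ω, ((1 / (μ * (1 - ρ))) * (W ω + ∑ i : Fin n, L i ω) - f) ^ 2 ∂P)
      ≤ (2 * C4 + S2) / (μ * (1 - ρ) ^ 2)
        + 2 * n * dmax ^ 2 / (μ ^ 2 * (1 - ρ) ^ 2 * ε₂ ^ 2) := by
  set S : Ω → ℝ := fun ω => ∑ i : Fin n, L i ω
  have hρ1 : 1 - ρ ≠ 0 := sub_ne_zero.2 (hρ ▸ (exp_lt_one_iff.2 (neg_neg_of_pos hε₁)).ne')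
  have hμ : μ ≠ 0 := hμ0.ne'
  have hunbiased : ∫ ω, 1 / (μ * (1 - ρ)) * (W ω + S ω) ∂P = f := by
    rw [integral_const_mul, integral_add (hW2.integrable one_le_two) (hL2.integrable one_le_two),
      hWmean, hLmean, add_zero]
    field_simp
  calc (∫ ω, (1 / (μ * (1 - ρ)) * (W ω + S ω) - f) ^ 2 ∂P)
      = Var[fun ω => 1 / (μ * (1 - ρ)) * (W ω + S ω); P] :=
        integral_sq_sub_eq_variance ((hW2.add hL2).aemeasurable.const_mul _) hunbiased
    _ = (1 / (μ * (1 - ρ))) ^ 2 * (Var[W; P] + Var[S; P]) := by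
        rw [variance_const_mul, hindep.variance_fun_add hW2 hL2]
    _ ≤ (1 / (μ * (1 - ρ))) ^ 2 * (μ * (2 * C4 + S2) + 2 * n * (dmax / ε₂) ^ 2) := by
        rw [hLvar]; gcongr
    _ = (2 * C4 + S2) / (μ * (1 - ρ) ^ 2)
          + 2 * n * dmax ^ 2 / (μ ^ 2 * (1 - ρ) ^ 2 * ε₂ ^ 2) := by
        field_simp

/-- Expected `l₂` loss of the `ARRFull` estimator with Laplace noise.
`W = Σᵢ wᵢ` is the noiseless statistic (unbiased up to the scaling factor,
with the stated variance bound), and `L i` are the independent Laplace noises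
with scale `d_max/ε₂` (mean `0`, variance `2(d_max/ε₂)²`), whose sum is
independent of `W`. -/
theorem arrfull_l2_loss_le
    {Ω : Type*} [MeasurableSpace Ω] (P : Measure Ω) [IsProbabilityMeasure P]
    (n : ℕ) (W : Ω → ℝ) (L : Fin n → Ω → ℝ)
    (f C4 S2 dmax : ℝ) (μ ρ ε₁ ε₂ : ℝ)
    (hε₁ : 0 < ε₁) (hρ : ρ = Real.exp (-ε₁)) (hμ0 : 0 < μ) (hμ1 : μ < 1)
    (hε₂ : 0 < ε₂) (hC4 : 0 ≤ C4) (hS2 : 0 ≤ S2) (hdmax : 0 ≤ dmax)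
    (hW2 : MemLp W 2 P) (hL2 : MemLp (fun ω => ∑ i : Fin n, L i ω) 2 P)
    (hWmean : ∫ ω, W ω ∂P = μ * (1 - ρ) * f)
    (hWvar : variance W P ≤ μ * (2 * C4 + S2))
    (hLmean : ∫ ω, (∑ i : Fin n, L i ω) ∂P = 0)
    (hLvar : variance (fun ω => ∑ i : Fin n, L i ω) P
      = 2 * n * (dmax / ε₂) ^ 2)
    (hindep : IndepFun W (fun ω => ∑ i : Fin n, L i ω) P) :
    (∫ ω, ((1 / (μ * (1 - ρ))) * (W ω + ∑ i : Fin n, L i ω) - f) ^ 2 ∂P)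
      ≤ (2 * C4 + S2) / (μ * (1 - ρ) ^ 2)
        + 2 * n * dmax ^ 2 / (μ ^ 2 * (1 - ρ) ^ 2 * ε₂ ^ 2) :=
  arrfull_l2_loss_le_general P n W L f C4 S2 dmax μ ρ ε₁ ε₂ hε₁ hρ hμ0 hW2 hL2 hWmean hWvar hLmean
    hLvar hindep
end
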